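/- For all integers 0 ≤ j ≤ k and every integer p, d_{k,j,p} = q^{(k(k+3) − j(j+3))/2 − p j(j+2)} · Σ_{l=0}^{k−j} (−1)^l q^{−p(l² + (2j+2)l) + l(l−1)/2} (1 − q^{2(l+j+1)}) (q;q)_{l+2j+1} / ((q;q)_{k+l+j+2} (q;q)_{k−l−j} (q;q)_l). -/

import Mathlib

open Finset

noncomputable section

/-- The field `F = ℚ(𝔮)` of rational functions over `ℚ` in an indeterminate `𝔮`. -/
abbrev F : Type := RatFunc ℚ

/-- The indeterminate `𝔮`. -/
noncomputable def qv : F := RatFunc.X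

/-- `{n} = 𝔮^n - 𝔮^{-n}` for `n : ℤ`. -/
def brc (n : ℤ) : F := qv ^ n - qv ^ (-n)

/-- `[n] = {n}/{1}`. -/
def brk (n : ℤ) : F := brc n / brc 1

/-- `{n}! = ∏_{j=1}^n {j}`. -/
def brcFac (n : ℕ) : F := ∏ j ∈ Finset.range n, brc ((j : ℤ) + 1)

/-- `[n]! = ∏_{j=1}^n [j]`. -/
def brkFac (n : ℕ) : F := ∏ j ∈ Finset.range n, brk ((j : ℤ) + 1)

/-- `q = 𝔮²`. -/
def qq : F := qv ^ 2

/-- The q-Pochhammer symbol `(x; q)_k = ∏_{j=0}^{k-1} (1 - x q^j)`. -/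
def poch (x : F) (k : ℕ) : F := ∏ j ∈ Finset.range k, (1 - x * qq ^ j)

/-- The q-binomial coefficient `[n choose i]_q`. -/
def qbinom (n i : ℕ) : F := poch qq n / (poch qq i * poch qq (n - i))

/-- `d_{k,j,p} = Σ_{i=j}^k (-1)^{i+j} 𝔮^{-2p i(i+2)} {2i+2} {i+1+j}! / ({k+i+2}! {k-i}! {i-j}!)`. -/
def dcoef (k j : ℕ) (p : ℤ) : F :=
  ∑ i ∈ Finset.Icc j k,
    (-1) ^ (i + j) * qv ^ (-2 * p * (i : ℤ) * ((i : ℤ) + 2)) * brc (2 * (i : ℤ) + 2) *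
        brcFac (i + 1 + j) /
      (brcFac (k + i + 2) * brcFac (k - i) * brcFac (i - j))

/-!
Since `{n} = -𝔮^{-n} (1 - q^n)`, induction gives `{n}! = (-1)^n 𝔮^{-n(n+1)/2} (q;q)_n`.
Substituting this into the `i`-th term of `d_{k,j,p}` and writing `i = j + l`, the identity holds
term by term: the signs agree because the total sign exponent is `l` plus an even number, and the
powers of `𝔮` agree by a quadratic identity between triangular numbers.
-/

lemma qv_ne_zero : qv ≠ 0 := RatFunc.X_ne_zero

lemma qq_zpow (z : ℤ) : qq ^ z = qv ^ (2 * z) := by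
  rw [qq, ← zpow_natCast, ← zpow_mul, Nat.cast_ofNat]

lemma qq_pow (n : ℕ) : qq ^ n = qv ^ (2 * (n : ℤ)) := by
  rw [← zpow_natCast, qq_zpow]

lemma brc_natCast (n : ℕ) : brc n = -qv ^ (-(n : ℤ)) * (1 - qq ^ n) := by
  have h : qv ^ (-(n : ℤ)) * qv ^ (2 * (n : ℤ)) = qv ^ (n : ℤ) := by
    rw [← zpow_add₀ qv_ne_zero]; ring_nf
  rw [brc, qq_pow]
  linear_combination -h

lemma poch_succ (x : F) (n : ℕ) : poch x (n + 1) = poch x n * (1 - x * qq ^ n) :=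
  prod_range_succ _ n

lemma brcFac_eq_poch (n : ℕ) :
    brcFac n = (-1) ^ n * qv ^ (-((n * (n + 1) / 2 : ℕ) : ℤ)) * poch qq n := by
  induction n with
  | zero => simp [brcFac, poch]
  | succ n ih =>
    have h : (n + 1) * (n + 1 + 1) / 2 = n * (n + 1) / 2 + (n + 1) := by
      rw [show (n + 1) * (n + 1 + 1) = n * (n + 1) + (n + 1) * 2 by ring,
        Nat.add_mul_div_right _ _ two_pos]
    rw [brcFac, prod_range_succ, ← brcFac, ih, poch_succ, ← pow_succ', h, ← Nat.cast_add_one,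
      brc_natCast]
    simp only [Nat.cast_add, Nat.cast_one, neg_add, zpow_add₀ qv_ne_zero]
    ring

/- The signs are written as integer powers of `-1` so that `ring` can cancel those of the
denominator against those of the numerator. -/
lemma dcoef_term_eq (k j i : ℕ) (p : ℤ) :
    (-1) ^ (i + j) * qv ^ (-2 * p * (i : ℤ) * ((i : ℤ) + 2)) * brc (2 * (i : ℤ) + 2) *
        brcFac (i + 1 + j) / (brcFac (k + i + 2) * brcFac (k - i) * brcFac (i - j)) =
      (-1) ^ ((i + j : ℕ) + 1 + (i + 1 + j : ℕ) - (k + i + 2 : ℕ) - (k - i : ℕ) - (i - j : ℕ) : ℤ) *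
        qv ^ (-2 * p * i * (i + 2) - (2 * i + 2) - ((i + 1 + j) * (i + 1 + j + 1) / 2 : ℕ) +
          ((k + i + 2) * (k + i + 2 + 1) / 2 : ℕ) + ((k - i) * (k - i + 1) / 2 : ℕ) +
          ((i - j) * (i - j + 1) / 2 : ℕ)) *
        ((1 - qq ^ (2 * i + 2)) * poch qq (i + 1 + j) /
          (poch qq (k + i + 2) * poch qq (k - i) * poch qq (i - j))) := by
  have hneg : (-1 : F) ≠ 0 := by norm_num
  rw [show 2 * (i : ℤ) + 2 = (2 * i + 2 : ℕ) by push_cast; ring, brc_natCast]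
  simp only [brcFac_eq_poch, ← zpow_natCast (-1 : F), zpow_add₀ qv_ne_zero, zpow_sub₀ qv_ne_zero,
    zpow_add₀ hneg, zpow_sub₀ hneg, zpow_neg, zpow_one, div_eq_mul_inv, mul_inv, inv_inv]
  ring

lemma natCast_mul_succ_div_two_mul_two (n : ℕ) :
    ((n * (n + 1) / 2 : ℕ) : ℤ) * 2 = n * (n + 1) := by
  exact_mod_cast Nat.div_two_mul_two_of_even (Nat.even_mul_succ_self n)

lemma natCast_mul_add_three_div_two_mul_two (n : ℕ) :
    ((n * (n + 3) / 2 : ℕ) : ℤ) * 2 = n * (n + 3) := by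
  exact_mod_cast Nat.div_two_mul_two_of_even (by grind [Nat.even_mul_succ_self])

lemma natCast_mul_pred_div_two_mul_two (n : ℕ) :
    ((n * (n - 1) / 2 : ℕ) : ℤ) * 2 = n * (n - 1) := by
  have h := Nat.div_two_mul_two_of_even (Nat.even_mul_pred_self n)
  rcases n with _ | n
  · simp
  · simp only [Nat.add_sub_cancel] at h ⊢
    push_cast
    rw [add_sub_cancel_right]
    exact_mod_cast h

lemma dcoef_exponent_eq (j k l : ℕ) (p : ℤ) (hl : j + l ≤ k) :
    -2 * p * ((j + l : ℕ) : ℤ) * (((j + l : ℕ) : ℤ) + 2) - (2 * ((j + l : ℕ) : ℤ) + 2) -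
        ((l + 2 * j + 1) * (l + 2 * j + 1 + 1) / 2 : ℕ) +
        ((k + l + j + 2) * (k + l + j + 2 + 1) / 2 : ℕ) +
        ((k - l - j) * (k - l - j + 1) / 2 : ℕ) + (l * (l + 1) / 2 : ℕ) =
      2 * (((k * (k + 3) / 2 : ℕ) : ℤ) - ((j * (j + 3) / 2 : ℕ) : ℤ) - p * j * (j + 2)) +
        2 * (-p * (l ^ 2 + (2 * j + 2) * l) + ((l * (l - 1) / 2 : ℕ) : ℤ)) := by
  have e1 := natCast_mul_succ_div_two_mul_two (l + 2 * j + 1)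
  have e2 := natCast_mul_succ_div_two_mul_two (k + l + j + 2)
  have e3 := natCast_mul_succ_div_two_mul_two (k - l - j)
  have e4 := natCast_mul_succ_div_two_mul_two l
  have e5 := natCast_mul_add_three_div_two_mul_two k
  have e6 := natCast_mul_add_three_div_two_mul_two j
  have e7 := natCast_mul_pred_div_two_mul_two l
  rw [Nat.cast_sub (by omega : j ≤ k - l), Nat.cast_sub (by omega : l ≤ k)] at e3
  simp only [Nat.cast_add, Nat.cast_mul, Nat.cast_ofNat, Nat.cast_one] at e1 e2 e4 ⊢
  refine mul_left_cancel₀ (two_ne_zero (α := ℤ)) ?_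
  linear_combination -e1 + e2 + e3 + e4 - 2 * e5 + 2 * e6 - 2 * e7

lemma dcoef_term_shift_eq (j k l : ℕ) (p : ℤ) (hl : j + l ≤ k) :
    (-1) ^ (j + l + j) * qv ^ (-2 * p * ((j + l : ℕ) : ℤ) * (((j + l : ℕ) : ℤ) + 2)) *
          brc (2 * ((j + l : ℕ) : ℤ) + 2) * brcFac (j + l + 1 + j) /
        (brcFac (k + (j + l) + 2) * brcFac (k - (j + l)) * brcFac (j + l - j)) =
      qq ^ (((k * (k + 3) / 2 : ℕ) : ℤ) - ((j * (j + 3) / 2 : ℕ) : ℤ) -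
          p * (j : ℤ) * ((j : ℤ) + 2)) *
        ((-1) ^ l * qq ^ (-p * ((l : ℤ) ^ 2 + (2 * (j : ℤ) + 2) * (l : ℤ)) +
            ((l * (l - 1) / 2 : ℕ) : ℤ)) *
          (1 - qq ^ (2 * (l + j + 1))) * poch qq (l + 2 * j + 1) /
          (poch qq (k + l + j + 2) * poch qq (k - l - j) * poch qq l)) := by
  rw [dcoef_term_eq, show j + l + 1 + j = l + 2 * j + 1 by omega,
    show k + (j + l) + 2 = k + l + j + 2 by omega, show k - (j + l) = k - l - j by omega,
    Nat.add_sub_cancel_left, show 2 * (j + l) + 2 = 2 * (l + j + 1) by omega]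
  have hsign : ((j + l + j : ℕ) + 1 + (l + 2 * j + 1 : ℕ) - (k + l + j + 2 : ℕ) -
      (k - l - j : ℕ) - (l : ℕ) : ℤ) = l + 2 * (2 * j - k) := by omega
  rw [hsign, zpow_add₀ (by norm_num), (even_two_mul _).neg_one_zpow, mul_one,
    dcoef_exponent_eq j k l p hl, zpow_add₀ qv_ne_zero, qq_zpow, qq_zpow, zpow_natCast]
  ring

/-- Rewriting `d_{k,j,p}` via q-Pochhammer symbols. -/
theorem stmt18 (j k : ℕ) (hjk : j ≤ k) (p : ℤ) :
    dcoef k j p = qq ^ (((k * (k + 3) / 2 : ℕ) : ℤ) - ((j * (j + 3) / 2 : ℕ) : ℤ) -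
        p * (j : ℤ) * ((j : ℤ) + 2)) *
      ∑ l ∈ Finset.range (k - j + 1),
        (-1) ^ l * qq ^ (-p * ((l : ℤ) ^ 2 + (2 * (j : ℤ) + 2) * (l : ℤ)) +
            ((l * (l - 1) / 2 : ℕ) : ℤ)) *
          (1 - qq ^ (2 * (l + j + 1))) * poch qq (l + 2 * j + 1) /
          (poch qq (k + l + j + 2) * poch qq (k - l - j) * poch qq l) := by
  rw [dcoef, ← Ico_add_one_right_eq_Icc, sum_Ico_eq_sum_range, mul_sum,
    show k + 1 - j = k - j + 1 by omega]
  refine sum_congr rfl fun l hl ↦ dcoef_term_shift_eq j k l p ?_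
  have := mem_range.mp hl
  omega
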